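/- arXiv:1206.5899 — 2 statements merged into one kernel-verified Lean document; each statement's English description precedes it below -/
import Mathlib

section
/- Let k ≥ 1, N = 2k, and suppose |c_i| = ρ for all i, for some real ρ ≥ 0. Define L0(n) = M₊ for n even, M₋ for n odd, and L1(n) = M₋ for n even, M₊ for n odd. Suppose the sequence (Y_n) in ℂ^N satisfies Y_{n+2} = L0(n) Y_n + L1(n) Y_{n+1} for all n ≥ 0, with Y_0 = 0 and Y_1 = B. Then Y_2 = M₋ B; for every even n > 2, Y_n = (ρ^{n−4} D₊ + ρ^{n−2} M₋) B; and for every odd n > 2, Y_n = ρ^{n−3} (D₊ + M₋) B. -/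
/-- `M₊` sends `e_{N−i+1} ↦ c_i e_i` for `1 ≤ i ≤ k` and `e_j ↦ 0` for
`1 ≤ j ≤ k` (here `N = 2k`; matrix with respect to the standard basis,
0-indexed). -/
noncomputable def Mplus (k : ℕ) (c : Fin k → ℂ) :
    Matrix (Fin (2 * k)) (Fin (2 * k)) ℂ := fun a b =>
  if h : (a : ℕ) < k ∧ (a : ℕ) + (b : ℕ) = 2 * k - 1 then c ⟨a, h.1⟩ else 0

/-- `M₋ = M₊†` sends `e_i ↦ conj(c_i) e_{N−i+1}` for `1 ≤ i ≤ k` and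
`e_j ↦ 0` for `k < j ≤ N`. -/
noncomputable def Mminus (k : ℕ) (c : Fin k → ℂ) :
    Matrix (Fin (2 * k)) (Fin (2 * k)) ℂ := fun a b =>
  if h : (b : ℕ) < k ∧ (a : ℕ) + (b : ℕ) = 2 * k - 1 then
    starRingEnd ℂ (c ⟨b, h.1⟩) else 0

/-- `D₊` sends `e_i ↦ |c_i|² e_i` for `1 ≤ i ≤ k` and `e_j ↦ 0` for
`k < j ≤ N`. -/
noncomputable def Dplus (k : ℕ) (c : Fin k → ℂ) :
    Matrix (Fin (2 * k)) (Fin (2 * k)) ℂ := fun a b =>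
  if h : a = b ∧ (a : ℕ) < k then ((‖c ⟨a, h.2⟩‖) ^ 2 : ℂ) else 0

/-- `D₋` sends `e_j ↦ |c_{N−j+1}|² e_j` for `k < j ≤ N` and `e_i ↦ 0` for
`1 ≤ i ≤ k`. -/
noncomputable def Dminus (k : ℕ) (c : Fin k → ℂ) :
    Matrix (Fin (2 * k)) (Fin (2 * k)) ℂ := fun a b =>
  if h : a = b ∧ k ≤ (a : ℕ) then
    ((‖c ⟨2 * k - 1 - (a : ℕ), by have := a.isLt; omega⟩‖) ^ 2 : ℂ)
  else 0

/-- `L0(n) = M₊` for `n` even, `M₋` for `n` odd. -/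
noncomputable def Lzero (k : ℕ) (c : Fin k → ℂ) (n : ℕ) :
    Matrix (Fin (2 * k)) (Fin (2 * k)) ℂ :=
  if Even n then Mplus k c else Mminus k c

/-- `L1(n) = M₋` for `n` even, `M₊` for `n` odd. -/
noncomputable def Lone (k : ℕ) (c : Fin k → ℂ) (n : ℕ) :
    Matrix (Fin (2 * k)) (Fin (2 * k)) ℂ :=
  if Even n then Mminus k c else Mplus k c

/-!
Write `Y n = X n B`. Each `X n` is a noncommutative polynomial in `M₊, M₋`, and the relations
`M₊ M₋ = D₊`, `M₋² = 0`, `M₊ D₊ = 0`, `M₋ D₊ = ρ² M₋` (the last one because all `|c_i| = ρ`)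
keep every product produced by the alternating recurrence inside the span of `D₊` and `M₋`.
The coefficients then follow a two-step pattern, which is verified against the recurrence;
a solution of a two-step recurrence is determined by `Y 0` and `Y 1`.
-/

namespace Matrix

variable {ι R : Type*} [DecidableEq ι] [CommRing R]

/-- The solution of `X (n + 2) = L₀ n * X n + L₁ n * X (n + 1)`, `X 0 = 0`, `X 1 = 1`, where
`(L₀ n, L₁ n)` is `(P, M)` for even `n` and `(M, P)` for odd `n`, whenever `P * M = D`,
`M * M = 0`, `P * D = 0` and `M * D = s • M` (see `alternatingClosedForm_add_two`). -/
def alternatingClosedForm (M D : Matrix ι ι R) (s : R) : ℕ → Matrix ι ι R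
  | 0 => 0
  | 1 => 1
  | 2 => M
  | n + 3 => if Even n then s ^ (n / 2) • (D + M) else s ^ (n / 2) • D + s ^ (n / 2 + 1) • M

variable {P M D : Matrix ι ι R} {s : R}

theorem alternatingClosedForm_odd (m : ℕ) :
    alternatingClosedForm M D s (2 * m + 3) = s ^ m • (D + M) := by
  simp [alternatingClosedForm]

theorem alternatingClosedForm_even (m : ℕ) :
    alternatingClosedForm M D s (2 * m + 4) = s ^ m • D + s ^ (m + 1) • M := by
  simp [alternatingClosedForm, show (2 * m + 1) / 2 = m by omega]

variable [Fintype ι]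

theorem alternatingClosedForm_add_two (hPM : P * M = D) (hMM : M * M = 0) (hPD : P * D = 0)
    (hMD : M * D = s • M) (n : ℕ) :
    alternatingClosedForm M D s (n + 2) =
      (if Even n then P else M) * alternatingClosedForm M D s n +
        (if Even n then M else P) * alternatingClosedForm M D s (n + 1) := by
  match n with
  | 0 => simp [alternatingClosedForm]
  | 1 => simp [alternatingClosedForm, hPM, add_comm]
  | 2 => simp [alternatingClosedForm, mul_add, hPM, hMD, hMM]
  | n + 3 =>
    obtain ⟨m, rfl | rfl⟩ := Nat.even_or_odd' n
    · rw [show 2 * m + 3 + 2 = 2 * (m + 1) + 3 by ring, alternatingClosedForm_odd,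
        alternatingClosedForm_odd, show 2 * m + 3 + 1 = 2 * m + 4 by ring,
        alternatingClosedForm_even]
      simp [parity_simps, mul_add, hPM, hMD, hMM, hPD, pow_succ, smul_smul, add_comm]
    · rw [show 2 * m + 1 + 3 + 2 = 2 * (m + 1) + 4 by ring, alternatingClosedForm_even,
        show 2 * m + 1 + 3 = 2 * m + 4 by ring, alternatingClosedForm_even,
        show 2 * m + 4 + 1 = 2 * (m + 1) + 3 by ring, alternatingClosedForm_odd]
      simp [parity_simps, mul_add, hPM, hMD, hMM, hPD, pow_succ, smul_smul]

theorem eq_alternatingClosedForm_mulVec (hPM : P * M = D) (hMM : M * M = 0) (hPD : P * D = 0)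
    (hMD : M * D = s • M) {Y : ℕ → ι → R} {B : ι → R}
    (hrec : ∀ n, Y (n + 2) =
      (if Even n then P else M) *ᵥ Y n + (if Even n then M else P) *ᵥ Y (n + 1))
    (h0 : Y 0 = 0) (h1 : Y 1 = B) (n : ℕ) :
    Y n = alternatingClosedForm M D s n *ᵥ B := by
  induction n using Nat.twoStepInduction with
  | zero => simp [h0, alternatingClosedForm]
  | one => simp [h1, alternatingClosedForm]
  | more n ih₀ ih₁ =>
    rw [hrec, ih₀, ih₁, alternatingClosedForm_add_two hPM hMM hPD hMD, add_mulVec, mulVec_mulVec,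
      mulVec_mulVec]

end Matrix

section

variable {k : ℕ} (c : Fin k → ℂ)

theorem Dplus_eq_diagonal :
    Dplus k c =
      Matrix.diagonal fun a : Fin (2 * k) => if h : (a : ℕ) < k then (‖c ⟨a, h⟩‖ ^ 2 : ℂ) else 0 := by
  ext a b
  by_cases hab : a = b
  · subst hab; simp [Dplus]
  · simp [Dplus, hab]

theorem Mplus_mul_Mminus : Mplus k c * Mminus k c = Dplus k c := by
  ext a b
  rw [Matrix.mul_apply, Finset.sum_eq_single ⟨2 * k - 1 - a, by omega⟩]
  · simp only [Mplus, Mminus, Dplus]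
    split_ifs with _ _ hab <;> try first | omega | simp
    obtain ⟨rfl, -⟩ := hab
    exact RCLike.mul_conj _
  · intro j _ hj
    simp only [Mplus]
    split_ifs with h
    · exact absurd (Fin.ext (by simp; omega)) hj
    · exact zero_mul _
  · simp

theorem Mminus_mul_Mminus : Mminus k c * Mminus k c = 0 := by
  ext a b
  simp only [Matrix.mul_apply, Mminus, Matrix.zero_apply]
  refine Finset.sum_eq_zero fun j _ => ?_
  split_ifs <;> first | omega | simp

theorem Mplus_mul_Dplus : Mplus k c * Dplus k c = 0 := by
  ext a b
  simp only [Dplus_eq_diagonal, Matrix.mul_diagonal, Mplus, Matrix.zero_apply]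
  split_ifs <;> first | omega | simp

theorem Mminus_mul_Dplus {ρ : ℝ} (hc : ∀ i, ‖c i‖ = ρ) :
    Mminus k c * Dplus k c = (ρ : ℂ) ^ 2 • Mminus k c := by
  ext a b
  simp only [Dplus_eq_diagonal, Matrix.mul_diagonal, Mminus, Matrix.smul_apply, hc]
  split_ifs <;> first | omega | simp [mul_comm]

end

theorem cauchy_problem_I_solution_general (k : ℕ) (c : Fin k → ℂ)
    (ρ : ℝ) (hc : ∀ i, ‖c i‖ = ρ)
    (Y : ℕ → (Fin (2 * k) → ℂ)) (B : Fin (2 * k) → ℂ)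
    (hrec : ∀ n : ℕ, Y (n + 2)
      = (Lzero k c n).mulVec (Y n) + (Lone k c n).mulVec (Y (n + 1)))
    (h0 : Y 0 = 0) (h1 : Y 1 = B) :
    Y 2 = (Mminus k c).mulVec B ∧
    (∀ n : ℕ, 2 < n → Even n →
      Y n = (((ρ ^ (n - 4) : ℝ) : ℂ) • Dplus k c
              + ((ρ ^ (n - 2) : ℝ) : ℂ) • Mminus k c).mulVec B) ∧
    (∀ n : ℕ, 2 < n → Odd n →
      Y n = (((ρ ^ (n - 3) : ℝ) : ℂ) • (Dplus k c + Mminus k c)).mulVec B) := by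
  have hY := Matrix.eq_alternatingClosedForm_mulVec (Mplus_mul_Mminus c) (Mminus_mul_Mminus c)
    (Mplus_mul_Dplus c) (Mminus_mul_Dplus c hc) hrec h0 h1
  refine ⟨hY 2, fun n hn hev => ?_, fun n hn hodd => ?_⟩
  · obtain ⟨m, rfl⟩ : ∃ m, n = 2 * m + 4 := by obtain ⟨t, rfl⟩ := hev; exact ⟨t - 2, by omega⟩
    rw [hY, Matrix.alternatingClosedForm_even, show 2 * m + 4 - 2 = 2 * (m + 1) by omega]
    simp [pow_mul]
  · obtain ⟨m, rfl⟩ : ∃ m, n = 2 * m + 3 := by obtain ⟨t, rfl⟩ := hodd; exact ⟨t - 1, by omega⟩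
    rw [hY, Matrix.alternatingClosedForm_odd]
    simp [pow_mul]

/-- Solution of the Cauchy problem (I): if `|c_i| = ρ` for all `i` and
`Y_{n+2} = L0(n) Y_n + L1(n) Y_{n+1}` with `Y_0 = 0`, `Y_1 = B`, then
`Y_2 = M₋ B`, `Y_n = (ρ^{n−4} D₊ + ρ^{n−2} M₋) B` for even `n > 2`, and
`Y_n = ρ^{n−3} (D₊ + M₋) B` for odd `n > 2`. -/
theorem cauchy_problem_I_solution (k : ℕ) (hk : 1 ≤ k) (c : Fin k → ℂ)
    (ρ : ℝ) (hρ : 0 ≤ ρ) (hc : ∀ i, ‖c i‖ = ρ)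
    (Y : ℕ → (Fin (2 * k) → ℂ)) (B : Fin (2 * k) → ℂ)
    (hrec : ∀ n : ℕ, Y (n + 2)
      = (Lzero k c n).mulVec (Y n) + (Lone k c n).mulVec (Y (n + 1)))
    (h0 : Y 0 = 0) (h1 : Y 1 = B) :
    Y 2 = (Mminus k c).mulVec B ∧
    (∀ n : ℕ, 2 < n → Even n →
      Y n = (((ρ ^ (n - 4) : ℝ) : ℂ) • Dplus k c
              + ((ρ ^ (n - 2) : ℝ) : ℂ) • Mminus k c).mulVec B) ∧
    (∀ n : ℕ, 2 < n → Odd n →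
      Y n = (((ρ ^ (n - 3) : ℝ) : ℂ) • (Dplus k c + Mminus k c)).mulVec B) :=
  cauchy_problem_I_solution_general k c ρ hc Y B hrec h0 h1
end

section
/- Let k ≥ 1, N = 2k, and suppose |c_i| = 1 for all i. Define L0(n) = M₊ for n even, M₋ for n odd, and L1(n) = M₋ for n even, M₊ for n odd. Let f : ℝ → ℂ^N be infinitely differentiable, and suppose (Y_n) is a sequence of functions ℝ → ℂ^N, each infinitely differentiable, satisfying the difference-differential equation Y_{n+2}(t) = L0(n)(Y_n'(t)) + L1(n)(Y_{n+1}(t)) for all n ≥ 0 and all t ∈ ℝ, with Y_0 ≡ 0 and Y_1 = f. Then Y_2(t) = M₋ f(t); for every even n > 2, Y_n(t) = D₊ f'(t) + M₋ f(t); and for every odd n > 2, Y_n(t) = D₊ f(t) + M₋ f'(t), for all t ∈ ℝ. -/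
lemma MplusMminus (k : ℕ) (c : Fin k → ℂ) : Mplus k c * Mminus k c = Dplus k c := by
  ext a b
  rw [Matrix.mul_apply]
  unfold Mplus Mminus Dplus
  by_cases h : a = b ∧ (a : ℕ) < k
  · obtain ⟨rfl, ha⟩ := h
    rw [dif_pos ⟨rfl, ha⟩]
    have hj : 2 * k - 1 - (a : ℕ) < 2 * k := by omega
    rw [Fintype.sum_eq_single (⟨2 * k - 1 - (a : ℕ), hj⟩ : Fin (2 * k))]
    · rw [dif_pos ⟨ha, by simp; omega⟩, dif_pos ⟨ha, by simp; omega⟩]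
      rw [Complex.mul_conj]
      norm_cast
      rw [Complex.sq_norm]
    · intro j hne
      by_cases h1 : (a : ℕ) < k ∧ (a : ℕ) + (j : ℕ) = 2 * k - 1
      · exfalso; exact hne (Fin.ext (by simp; omega))
      · rw [dif_neg h1, zero_mul]
  · rw [dif_neg h]
    apply Finset.sum_eq_zero
    intro j _
    by_cases h1 : (a : ℕ) < k ∧ (a : ℕ) + (j : ℕ) = 2 * k - 1
    · by_cases h2 : (b : ℕ) < k ∧ (j : ℕ) + (b : ℕ) = 2 * k - 1
      · exact absurd ⟨Fin.ext (by omega), h1.1⟩ h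
      · rw [dif_neg h2, mul_zero]
    · rw [dif_neg h1, zero_mul]

lemma MminusMminus (k : ℕ) (c : Fin k → ℂ) : Mminus k c * Mminus k c = 0 := by
  ext a b
  rw [Matrix.mul_apply]
  apply Finset.sum_eq_zero
  intro j _
  unfold Mminus
  by_cases h1 : (j : ℕ) < k ∧ (a : ℕ) + (j : ℕ) = 2 * k - 1
  · by_cases h2 : (b : ℕ) < k ∧ (j : ℕ) + (b : ℕ) = 2 * k - 1
    · exfalso; omega
    · rw [dif_neg h2, mul_zero]
  · rw [dif_neg h1, zero_mul]

lemma MplusDplus (k : ℕ) (c : Fin k → ℂ) : Mplus k c * Dplus k c = 0 := by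
  ext a b
  rw [Matrix.mul_apply]
  apply Finset.sum_eq_zero
  intro j _
  unfold Mplus Dplus
  by_cases h1 : (a : ℕ) < k ∧ (a : ℕ) + (j : ℕ) = 2 * k - 1
  · by_cases h2 : j = b ∧ (j : ℕ) < k
    · exfalso; omega
    · rw [dif_neg h2, mul_zero]
  · rw [dif_neg h1, zero_mul]

lemma MminusDplus (k : ℕ) (c : Fin k → ℂ) (hc : ∀ i, ‖c i‖ = 1) :
    Mminus k c * Dplus k c = Mminus k c := by
  ext a b
  rw [Matrix.mul_apply]
  rw [Fintype.sum_eq_single b]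
  · unfold Mminus Dplus
    by_cases h1 : (b : ℕ) < k ∧ (a : ℕ) + (b : ℕ) = 2 * k - 1
    · rw [dif_pos h1, dif_pos ⟨rfl, h1.1⟩, hc]
      norm_num
    · rw [dif_neg h1, zero_mul]
  · intro j hne
    unfold Mminus Dplus
    by_cases h2 : j = b ∧ (j : ℕ) < k
    · exact absurd h2.1 hne
    · rw [dif_neg h2, mul_zero]

lemma hasDerivAt_mulVec {n : ℕ} (A : Matrix (Fin n) (Fin n) ℂ) {g : ℝ → Fin n → ℂ}
    {g' : Fin n → ℂ} {t : ℝ} (hg : HasDerivAt g g' t) :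
    HasDerivAt (fun s => A.mulVec (g s)) (A.mulVec g') t := by
  have := ((Matrix.mulVecLin A).toContinuousLinearMap.restrictScalars
    ℝ).hasFDerivAt.comp_hasDerivAt t hg
  simpa [Function.comp_def] using this

lemma deriv_formula {n : ℕ} {Y : ℝ → Fin n → ℂ} (A B : Matrix (Fin n) (Fin n) ℂ)
    {u v : ℝ → Fin n → ℂ} (hu : Differentiable ℝ u) (hv : Differentiable ℝ v)
    (h : ∀ t, Y t = A.mulVec (u t) + B.mulVec (v t)) (t : ℝ) :
    deriv Y t = A.mulVec (deriv u t) + B.mulVec (deriv v t) := by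
  have h1 := hasDerivAt_mulVec A (hu t).hasDerivAt
  have h2 := hasDerivAt_mulVec B (hv t).hasDerivAt
  have h3 := (h1.add h2).congr_of_eventuallyEq (Filter.Eventually.of_forall h)
  exact h3.deriv

lemma deriv_formula1 {n : ℕ} {Y : ℝ → Fin n → ℂ} (A : Matrix (Fin n) (Fin n) ℂ)
    {u : ℝ → Fin n → ℂ} (hu : Differentiable ℝ u)
    (h : ∀ t, Y t = A.mulVec (u t)) (t : ℝ) :
    deriv Y t = A.mulVec (deriv u t) := by
  have h1 := hasDerivAt_mulVec A (hu t).hasDerivAt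
  exact (h1.congr_of_eventuallyEq (Filter.Eventually.of_forall h)).deriv

/-- Difference-differential equation: if `|c_i| = 1` for all `i`, `f` is
infinitely differentiable, and the smooth functions `Y_n : ℝ → ℂ^N` satisfy
`Y_{n+2}(t) = L0(n) Y_n'(t) + L1(n) Y_{n+1}(t)` with `Y_0 ≡ 0`, `Y_1 = f`,
then `Y_2(t) = M₋ f(t)`, `Y_n(t) = D₊ f'(t) + M₋ f(t)` for even `n > 2`, and
`Y_n(t) = D₊ f(t) + M₋ f'(t)` for odd `n > 2`. -/
theorem difference_differential_solution (k : ℕ) (hk : 1 ≤ k)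
    (c : Fin k → ℂ) (hc : ∀ i, ‖c i‖ = 1)
    (f : ℝ → (Fin (2 * k) → ℂ)) (hf : ContDiff ℝ (⊤ : ℕ∞) f)
    (Y : ℕ → ℝ → (Fin (2 * k) → ℂ)) (hY : ∀ n, ContDiff ℝ (⊤ : ℕ∞) (Y n))
    (hrec : ∀ n : ℕ, ∀ t : ℝ, Y (n + 2) t
      = (Lzero k c n).mulVec (deriv (Y n) t)
        + (Lone k c n).mulVec (Y (n + 1) t))
    (h0 : ∀ t : ℝ, Y 0 t = 0) (h1 : ∀ t : ℝ, Y 1 t = f t) :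
    (∀ t : ℝ, Y 2 t = (Mminus k c).mulVec (f t)) ∧
    (∀ n : ℕ, 2 < n → Even n → ∀ t : ℝ,
      Y n t = (Dplus k c).mulVec (deriv f t) + (Mminus k c).mulVec (f t)) ∧
    (∀ n : ℕ, 2 < n → Odd n → ∀ t : ℝ,
      Y n t = (Dplus k c).mulVec (f t) + (Mminus k c).mulVec (deriv f t)) := by
  set MP := Mplus k c
  set MN := Mminus k c
  set DP := Dplus k c
  -- differentiability facts
  have hf0 : ContDiff ℝ (⊤ : ℕ∞) f := hf.of_le (by simp)
  have hdf : Differentiable ℝ f := hf0.differentiable (by norm_cast)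
  have hf1 : ContDiff ℝ (⊤ : ℕ∞) (deriv f) := (contDiff_infty_iff_deriv.mp hf0).2
  have hdf' : Differentiable ℝ (deriv f) := hf1.differentiable (by norm_cast)
  -- matrix identities
  have hPM : MP * MN = DP := MplusMminus k c
  have hMM : MN * MN = 0 := MminusMminus k c
  have hPD : MP * DP = 0 := MplusDplus k c
  have hMD : MN * DP = MN := MminusDplus k c hc
  -- parity of L
  have hLz_even : ∀ n, Even n → Lzero k c n = MP := fun n hn => if_pos hn
  have hLz_odd : ∀ n, ¬ Even n → Lzero k c n = MN := fun n hn => if_neg hn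
  have hLo_even : ∀ n, Even n → Lone k c n = MN := fun n hn => if_pos hn
  have hLo_odd : ∀ n, ¬ Even n → Lone k c n = MP := fun n hn => if_neg hn
  -- Y2
  have hY0 : deriv (Y 0) = fun _ => (0 : Fin (2 * k) → ℂ) := by
    have : Y 0 = fun _ => (0 : Fin (2 * k) → ℂ) := funext h0
    rw [this]; ext t i; simp
  have hY2 : ∀ t, Y 2 t = MN.mulVec (f t) := by
    intro t
    rw [hrec 0 t, hLz_even 0 (by decide), hLo_even 0 (by decide), hY0, h1]
    simp
  have hdY2 : ∀ t, deriv (Y 2) t = MN.mulVec (deriv f t) :=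
    deriv_formula1 MN hdf hY2
  -- Y3
  have hY3 : ∀ t, Y 3 t = DP.mulVec (f t) + MN.mulVec (deriv f t) := by
    intro t
    rw [hrec 1 t, hLz_odd 1 (by decide), hLo_odd 1 (by decide)]
    have hd1 : deriv (Y 1) t = deriv f t := by
      rw [show Y 1 = f from funext h1]
    rw [hd1, hY2 t, Matrix.mulVec_mulVec, hPM, add_comm]
  -- algebraic step lemmas
  have evenAlg : ∀ x y z : Fin (2 * k) → ℂ,
      MP.mulVec (DP.mulVec z + MN.mulVec y) + MN.mulVec (DP.mulVec x + MN.mulVec y)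
        = DP.mulVec y + MN.mulVec x := by
    intro x y z
    rw [Matrix.mulVec_add, Matrix.mulVec_add, Matrix.mulVec_mulVec, Matrix.mulVec_mulVec,
      Matrix.mulVec_mulVec, Matrix.mulVec_mulVec, hPD, hPM, hMD, hMM,
      Matrix.zero_mulVec, Matrix.zero_mulVec]
    abel
  have oddAlg : ∀ x y z : Fin (2 * k) → ℂ,
      MN.mulVec (DP.mulVec y + MN.mulVec z) + MP.mulVec (DP.mulVec y + MN.mulVec x)
        = DP.mulVec x + MN.mulVec y := by
    intro x y z
    rw [Matrix.mulVec_add, Matrix.mulVec_add, Matrix.mulVec_mulVec, Matrix.mulVec_mulVec,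
      Matrix.mulVec_mulVec, Matrix.mulVec_mulVec, hPD, hPM, hMD, hMM,
      Matrix.zero_mulVec, Matrix.zero_mulVec]
    abel
  -- base of induction: Y4, Y5
  have hY4 : ∀ t, Y 4 t = DP.mulVec (deriv f t) + MN.mulVec (f t) := by
    intro t
    rw [show (4 : ℕ) = 2 + 2 from rfl, hrec 2 t, hLz_even 2 (by decide),
      hLo_even 2 (by decide), hdY2 t, hY3 t, Matrix.mulVec_add, Matrix.mulVec_mulVec,
      Matrix.mulVec_mulVec, Matrix.mulVec_mulVec, hPM, hMD, hMM, Matrix.zero_mulVec]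
    abel
  have hdY3 : ∀ t, deriv (Y 3) t = DP.mulVec (deriv f t) + MN.mulVec (deriv (deriv f) t) :=
    deriv_formula DP MN hdf hdf' hY3
  have hY5 : ∀ t, Y 5 t = DP.mulVec (f t) + MN.mulVec (deriv f t) := by
    intro t
    rw [show (5 : ℕ) = 3 + 2 from rfl, hrec 3 t, hLz_odd 3 (by decide),
      hLo_odd 3 (by decide), hdY3 t, hY4 t]
    exact oddAlg (f t) (deriv f t) (deriv (deriv f) t)
  -- main induction
  have main : ∀ m : ℕ,
      (∀ t, Y (2 * m + 4) t = DP.mulVec (deriv f t) + MN.mulVec (f t)) ∧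
      (∀ t, Y (2 * m + 5) t = DP.mulVec (f t) + MN.mulVec (deriv f t)) := by
    intro m
    induction m with
    | zero => exact ⟨hY4, hY5⟩
    | succ m ih =>
      obtain ⟨ihE, ihO⟩ := ih
      have hdE : ∀ t, deriv (Y (2 * m + 4)) t
          = DP.mulVec (deriv (deriv f) t) + MN.mulVec (deriv f t) :=
        deriv_formula DP MN hdf' hdf ihE
      have hE : ∀ t, Y (2 * m + 6) t = DP.mulVec (deriv f t) + MN.mulVec (f t) := by
        intro t
        have := hrec (2 * m + 4) t
        rw [show 2 * m + 4 + 2 = 2 * m + 6 from rfl] at this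
        rw [this, hLz_even _ ⟨m + 2, by ring⟩, hLo_even _ ⟨m + 2, by ring⟩, hdE t, ihO t]
        exact evenAlg (f t) (deriv f t) (deriv (deriv f) t)
      have hdO : ∀ t, deriv (Y (2 * m + 5)) t
          = DP.mulVec (deriv f t) + MN.mulVec (deriv (deriv f) t) :=
        deriv_formula DP MN hdf hdf' ihO
      have hO : ∀ t, Y (2 * m + 7) t = DP.mulVec (f t) + MN.mulVec (deriv f t) := by
        intro t
        have := hrec (2 * m + 5) t
        rw [show 2 * m + 5 + 2 = 2 * m + 7 from rfl] at this
        rw [this, hLz_odd _ (by simp [Nat.even_add_one, parity_simps]),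
          hLo_odd _ (by simp [Nat.even_add_one, parity_simps]),
          hdO t, hE t]
        exact oddAlg (f t) (deriv f t) (deriv (deriv f) t)
      constructor
      · intro t
        have h6 : 2 * (m + 1) + 4 = 2 * m + 6 := by ring
        rw [h6]; exact hE t
      · intro t
        have h7 : 2 * (m + 1) + 5 = 2 * m + 7 := by ring
        rw [h7]; exact hO t
  refine ⟨hY2, ?_, ?_⟩
  · intro n hn he t
    obtain ⟨j, hj⟩ := he
    have hm : n = 2 * (j - 2) + 4 := by omega
    rw [hm]; exact (main (j - 2)).1 t
  · intro n hn ho t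
    obtain ⟨j, hj⟩ := ho
    rcases Nat.lt_or_ge j 2 with h | h
    · have : n = 3 := by omega
      rw [this]; exact hY3 t
    · have hm : n = 2 * (j - 2) + 5 := by omega
      rw [hm]; exact (main (j - 2)).2 t
end
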